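/- For all integers n ≥ 5 and all real x with 0 < x < 1/(n-2), the polynomial f1(x) = -(5n^4 - 18n^3 + 2n^2 + 32)x^2 + (n^3 + 16n^2 - 8n - 64)x + 4(n+2)(n-4) is strictly positive. -/

import Mathlib

/-! A concave quadratic on `[0, t]` lies above its chord, so it is positive there as soon as it is
positive at `0` and nonnegative at `t`. Here `f1` is concave in `x`, `f1 0 = 4 (n + 2) (n - 4) > 0`,
and `(n - 2)² f1 (1 / (n - 2)) = 8 n³ - 26 n² + 48 n - 32 > 0`. -/

section ConcaveQuadratic

variable {𝕜 : Type*} [Field 𝕜] [LinearOrder 𝕜] [IsStrictOrderedRing 𝕜]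

theorem neg_mul_sq_add_mul_add_pos_of_lt {a b c t x : 𝕜} (ha : 0 ≤ a) (hc : 0 < c)
    (ht : 0 ≤ -a * t ^ 2 + b * t + c) (hx : 0 ≤ x) (hxt : x < t) :
    0 < -a * x ^ 2 + b * x + c := by
  have htx : 0 < t - x := sub_pos.mpr hxt
  have hchord : 0 < t * (-a * x ^ 2 + b * x + c) := by
    have hchord_eq : t * (-a * x ^ 2 + b * x + c) =
        (t - x) * c + x * (-a * t ^ 2 + b * t + c) + a * x * t * (t - x) := by ring
    rw [hchord_eq]
    have := mul_nonneg (mul_nonneg (mul_nonneg ha hx) (hx.trans hxt.le)) htx.le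
    have := mul_nonneg hx ht
    have := mul_pos htx hc
    linarith
  exact pos_of_mul_pos_right hchord (hx.trans hxt.le)

end ConcaveQuadratic

theorem f1_endpoint_mul_sq (n : ℝ) (hn : n ≠ 2) :
    (n - 2) ^ 2 * (-(5 * n ^ 4 - 18 * n ^ 3 + 2 * n ^ 2 + 32) * (1 / (n - 2)) ^ 2
        + (n ^ 3 + 16 * n ^ 2 - 8 * n - 64) * (1 / (n - 2)) + 4 * (n + 2) * (n - 4)) =
      8 * n ^ 3 - 26 * n ^ 2 + 48 * n - 32 := by
  have : n - 2 ≠ 0 := sub_ne_zero.mpr hn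
  field_simp
  ring

theorem f1_endpoint_nonneg (n : ℝ) (hn : 4 ≤ n) :
    0 ≤ -(5 * n ^ 4 - 18 * n ^ 3 + 2 * n ^ 2 + 32) * (1 / (n - 2)) ^ 2
        + (n ^ 3 + 16 * n ^ 2 - 8 * n - 64) * (1 / (n - 2)) + 4 * (n + 2) * (n - 4) := by
  have hcubic : 0 ≤ 8 * n ^ 3 - 26 * n ^ 2 + 48 * n - 32 := by
    nlinarith [mul_nonneg (mul_nonneg (by linarith : (0 : ℝ) ≤ n) (by linarith : (0 : ℝ) ≤ n))
      (by linarith : (0 : ℝ) ≤ 8 * n - 26)]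
  rw [← f1_endpoint_mul_sq n (by linarith)] at hcubic
  exact (mul_nonneg_iff_of_pos_left (pow_pos (by linarith) 2)).mp hcubic

theorem f1_leading_coeff_nonneg (n : ℝ) (hn : 4 ≤ n) :
    0 ≤ 5 * n ^ 4 - 18 * n ^ 3 + 2 * n ^ 2 + 32 := by
  nlinarith [mul_nonneg (pow_nonneg (by linarith : (0 : ℝ) ≤ n) 3)
    (by linarith : (0 : ℝ) ≤ 5 * n - 18), sq_nonneg n]

theorem f1_pos (n : ℤ) (hn : 5 ≤ n) (x : ℝ) (hx0 : 0 < x) (hx1 : x < 1 / ((n : ℝ) - 2)) :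
    0 < -((5 : ℝ) * n ^ 4 - 18 * n ^ 3 + 2 * n ^ 2 + 32) * x ^ 2
        + ((n : ℝ) ^ 3 + 16 * n ^ 2 - 8 * n - 64) * x
        + 4 * ((n : ℝ) + 2) * ((n : ℝ) - 4) := by
  have hn : (5 : ℝ) ≤ n := by exact_mod_cast hn
  refine neg_mul_sq_add_mul_add_pos_of_lt (f1_leading_coeff_nonneg n (by linarith)) ?_
    (f1_endpoint_nonneg n (by linarith)) hx0.le hx1
  exact mul_pos (by linarith) (by linarith)
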